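/- Let g ≥ 2 and let (x_n) be a sequence of integers converging in the ring ℤ_g of g-adic integers (the inverse limit of ℤ/g^iℤ) to a limit x that is not an integer. Then the word lengths ℓ_g(x_n) diverge to infinity. -/

import Mathlib

/-- The generating set `S_g = {± g^k : k ∈ ℕ}` in `ℤ`. -/
def Sg (g : ℤ) : Set ℤ := {x | ∃ n : ℕ, x = g ^ n ∨ x = -g ^ n}

/-- The word length of `k` with respect to `S_g`. -/
noncomputable def wlen (g : ℤ) (k : ℤ) : ℕ :=
  sInf {m | ∃ l : List ℤ, (∀ x ∈ l, x ∈ Sg g) ∧ l.length = m ∧ l.sum = k}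

/-!
Suppose `ℓ_g(x_n) < b` for infinitely many `n`. Let `c_N` be the word length of the limit
`x` modulo `g^N`, i.e. of `x_n` modulo `g^N` for large `n`; it is nondecreasing in `N` and
bounded by `b`, hence constant from some `N₀` on. For `M ≥ N₀`, a shortest word for `x`
modulo `g^M` cannot contain a power `≥ g^N₀` (dropping it would give a shorter word modulo
`g^N₀`), so `x ≡ s_M (mod g^M)` with `|s_M| ≤ b g^N₀`. Integers of bounded size that
approximate `x` to ever higher order are eventually constant, and that constant is `x`.
-/

open Filter

/-- The word length of the residue class of `k` in `ℤ/g^Nℤ`. -/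
noncomputable def wlenMod (g : ℤ) (N : ℕ) (k : ℤ) : ℕ :=
  sInf {m | ∃ l : List ℤ, (∀ x ∈ l, x ∈ Sg g) ∧ l.length = m ∧ g ^ N ∣ k - l.sum}

lemma List.dvd_sum_sub_sum_filter {α : Type*} [CommRing α] {d : α} {p : α → Bool}
    {l : List α} (h : ∀ e ∈ l, p e = false → d ∣ e) : d ∣ l.sum - (l.filter p).sum := by
  rw [← (List.filter_append_perm p l).sum_eq, List.sum_append, add_sub_cancel_left]
  exact List.dvd_sum fun e he => by
    rw [List.mem_filter, Bool.not_eq_true'] at he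
    exact h e he.1 (by simpa using he.2)

lemma List.abs_sum_le_length_mul {l : List ℤ} {B : ℤ} (h : ∀ e ∈ l, |e| ≤ B) :
    |l.sum| ≤ l.length * B := by
  calc |l.sum| = |(l : Multiset ℤ).sum| := by rw [Multiset.sum_coe]
    _ ≤ ((l : Multiset ℤ).map abs).sum := Multiset.abs_sum_le_sum_abs
    _ ≤ l.length * B := by
      simpa using Multiset.sum_le_card_nsmul ((l : Multiset ℤ).map abs) B (by simpa using h)

namespace Sg

variable {g e : ℤ}

lemma exists_list_sum_eq (g k : ℤ) : ∃ l : List ℤ, (∀ x ∈ l, x ∈ Sg g) ∧ l.sum = k := by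
  refine ⟨List.replicate k.natAbs (if 0 ≤ k then 1 else -1), fun e he => ?_, ?_⟩
  · rw [List.eq_of_mem_replicate he]
    exact ⟨0, by split_ifs <;> simp⟩
  · rw [List.sum_replicate, nsmul_eq_mul]
    split_ifs <;> omega

lemma abs_eq (hg : 0 ≤ g) (he : e ∈ Sg g) : ∃ a : ℕ, |e| = g ^ a := by
  obtain ⟨a, rfl | rfl⟩ := he <;> exact ⟨a, by simp [abs_of_nonneg, hg]⟩

lemma pow_dvd (hg : 1 < g) (he : e ∈ Sg g) {N : ℕ} (hN : g ^ N ≤ |e|) : g ^ N ∣ e := by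
  obtain ⟨a, ha⟩ := abs_eq (by omega) he
  rw [ha, pow_le_pow_iff_right₀ hg] at hN
  exact (dvd_abs _ _).1 (ha ▸ pow_dvd_pow g hN)

end Sg

section WordLengthMod

variable {g : ℤ} {N M : ℕ} {k : ℤ}

lemma exists_list_length_eq_wlen (g k : ℤ) :
    ∃ l : List ℤ, (∀ x ∈ l, x ∈ Sg g) ∧ l.length = wlen g k ∧ l.sum = k := by
  obtain ⟨l, hl, hsum⟩ := Sg.exists_list_sum_eq g k
  exact Nat.sInf_mem (s := {m | ∃ l : List ℤ, (∀ x ∈ l, x ∈ Sg g) ∧ l.length = m ∧ l.sum = k})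
    ⟨l.length, l, hl, rfl, hsum⟩

lemma exists_list_length_eq_wlenMod (g : ℤ) (N : ℕ) (k : ℤ) :
    ∃ l : List ℤ, (∀ x ∈ l, x ∈ Sg g) ∧ l.length = wlenMod g N k ∧ g ^ N ∣ k - l.sum := by
  obtain ⟨l, hl, hsum⟩ := Sg.exists_list_sum_eq g k
  exact Nat.sInf_mem
    (s := {m | ∃ l : List ℤ, (∀ x ∈ l, x ∈ Sg g) ∧ l.length = m ∧ g ^ N ∣ k - l.sum})
    ⟨l.length, l, hl, rfl, by simp [hsum]⟩

lemma wlenMod_le_length {l : List ℤ} (hl : ∀ x ∈ l, x ∈ Sg g) (h : g ^ N ∣ k - l.sum) :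
    wlenMod g N k ≤ l.length :=
  Nat.sInf_le ⟨l, hl, rfl, h⟩

lemma wlenMod_le_wlen : wlenMod g N k ≤ wlen g k := by
  obtain ⟨l, hl, hlen, hsum⟩ := exists_list_length_eq_wlen g k
  exact hlen ▸ wlenMod_le_length hl (by simp [hsum])

lemma wlenMod_mono (h : N ≤ M) : wlenMod g N k ≤ wlenMod g M k := by
  obtain ⟨l, hl, hlen, hdvd⟩ := exists_list_length_eq_wlenMod g M k
  exact hlen ▸ wlenMod_le_length hl ((pow_dvd_pow g h).trans hdvd)

lemma wlenMod_eq_of_dvd {k' : ℤ} (h : g ^ N ∣ k - k') : wlenMod g N k = wlenMod g N k' := by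
  have key {a b : ℤ} (hab : g ^ N ∣ a - b) : wlenMod g N b ≤ wlenMod g N a := by
    obtain ⟨l, hl, hlen, hdvd⟩ := exists_list_length_eq_wlenMod g N a
    exact hlen ▸ wlenMod_le_length hl (by simpa using dvd_sub hdvd hab)
  exact le_antisymm (key (dvd_sub_comm.1 h)) (key h)

/-- A shortest word modulo `g^M` uses only powers below `g^N`: dropping a larger one would
leave a shorter word modulo `g^N`. -/
lemma exists_abs_le_of_wlenMod_eq (hg : 1 < g) (hNM : N ≤ M)
    (h : wlenMod g N k = wlenMod g M k) :
    ∃ s : ℤ, |s| ≤ wlenMod g M k * g ^ N ∧ g ^ M ∣ k - s := by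
  obtain ⟨l, hl, hlen, hdvd⟩ := exists_list_length_eq_wlenMod g M k
  have hsmall : ∀ e ∈ l, |e| < g ^ N := by
    by_contra! ⟨e, he, hbig⟩
    set l' := l.filter fun e => decide (|e| < g ^ N)
    have hdrop : g ^ N ∣ l.sum - l'.sum := List.dvd_sum_sub_sum_filter fun e he hfalse =>
      Sg.pow_dvd hg (hl e he) (by simpa using hfalse)
    have hshorter : l'.length < l.length :=
      List.length_filter_lt_length_iff_exists.2 ⟨e, he, by simpa using hbig⟩
    have : wlenMod g N k ≤ l'.length := wlenMod_le_length
      (fun e he => hl e (List.mem_of_mem_filter he))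
      (by simpa using dvd_add ((pow_dvd_pow g hNM).trans hdvd) hdrop)
    omega
  exact ⟨l.sum, hlen ▸ List.abs_sum_le_length_mul fun e he => (hsmall e he).le, hdvd⟩

end WordLengthMod

section Sequence

variable {g : ℤ} {x : ℕ → ℤ}

lemma Nat.eventually_eq_ciSup_of_monotone {c : ℕ → ℕ} (hc : Monotone c)
    (hbdd : BddAbove (Set.range c)) : ∀ᶠ N in atTop, c N = ⨆ N, c N :=
  tendsto_pure.1 (nhds_discrete ℕ ▸ tendsto_atTop_ciSup hc hbdd)

lemma exists_eventually_wlenMod_eq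
    (hcauchy : ∀ N : ℕ, ∃ n₀ : ℕ, ∀ m ≥ n₀, ∀ n ≥ n₀, g ^ N ∣ x m - x n) (N : ℕ) :
    ∃ c : ℕ, ∀ᶠ n in atTop, wlenMod g N (x n) = c := by
  obtain ⟨n₀, hn₀⟩ := hcauchy N
  exact ⟨_, eventually_atTop.2 ⟨n₀, fun n hn => wlenMod_eq_of_dvd (hn₀ n hn n₀ le_rfl)⟩⟩

lemma exists_bounded_approx_of_frequently_wlen_lt (hg : 1 < g)
    (hcauchy : ∀ N : ℕ, ∃ n₀ : ℕ, ∀ m ≥ n₀, ∀ n ≥ n₀, g ^ N ∣ x m - x n) {b : ℕ}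
    (hb : ∃ᶠ n in atTop, wlen g (x n) < b) :
    ∃ B : ℤ, ∀ M : ℕ, ∃ s : ℤ, |s| ≤ B ∧ ∀ᶠ n in atTop, g ^ M ∣ x n - s := by
  choose c hc using exists_eventually_wlenMod_eq hcauchy
  have hc_mono : Monotone c := fun N M hNM => by
    obtain ⟨n, hN, hM⟩ := ((hc N).and (hc M)).exists
    exact hN ▸ hM ▸ wlenMod_mono hNM
  have hc_lt (N : ℕ) : c N < b := by
    obtain ⟨n, hN, hlt⟩ := ((hc N).and_frequently hb).exists
    exact hN ▸ wlenMod_le_wlen.trans_lt hlt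
  obtain ⟨N₀, hN₀⟩ := eventually_atTop.1 <|
    Nat.eventually_eq_ciSup_of_monotone hc_mono ⟨b, Set.forall_mem_range.2 fun N => (hc_lt N).le⟩
  refine ⟨b * g ^ N₀, fun M => ?_⟩
  set M' := max M N₀
  obtain ⟨n₀, hn₀⟩ := hcauchy M'
  obtain ⟨n, hn, hN₀n, hM'n⟩ :=
    ((eventually_ge_atTop n₀).and ((hc N₀).and (hc M'))).exists
  obtain ⟨s, hs, hdvd⟩ := exists_abs_le_of_wlenMod_eq (k := x n) hg (le_max_right M N₀)
    (by rw [hN₀n, hM'n, hN₀ N₀ le_rfl, hN₀ M' (le_max_right M N₀)])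
  refine ⟨s, hs.trans ?_, eventually_atTop.2 ⟨n₀, fun m hm => ?_⟩⟩
  · rw [hM'n]
    gcongr
    exact_mod_cast (hc_lt M').le
  · exact (pow_dvd_pow g (le_max_left M N₀)).trans (by simpa using dvd_add (hn₀ m hm n hn) hdvd)

lemma exists_int_of_bounded_approx (hg : 1 < g) {B : ℤ}
    (h : ∀ M : ℕ, ∃ s : ℤ, |s| ≤ B ∧ ∀ᶠ n in atTop, g ^ M ∣ x n - s) :
    ∃ k : ℤ, ∀ N : ℕ, ∀ᶠ n in atTop, g ^ N ∣ x n - k := by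
  obtain ⟨M₀, hM₀⟩ := pow_unbounded_of_one_lt (2 * B) hg
  obtain ⟨k, hk, hxk⟩ := h M₀
  refine ⟨k, fun N => ?_⟩
  obtain ⟨s, hs, hxs⟩ := h (max N M₀)
  obtain ⟨n, hns, hnk⟩ := (hxs.and hxk).exists
  have hsk : s = k := by
    have hdvd : g ^ M₀ ∣ s - k := by
      simpa using dvd_sub hnk ((pow_dvd_pow g (le_max_right N M₀)).trans hns)
    have : |s - k| < g ^ M₀ := by
      calc |s - k| ≤ |s| + |k| := abs_sub _ _
        _ < g ^ M₀ := by linarith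
    linarith [Int.eq_zero_of_abs_lt_dvd hdvd this]
  exact hxs.mono fun n hn => (pow_dvd_pow g (le_max_left N M₀)).trans (hsk ▸ hn)

end Sequence

/-- If a sequence of integers is Cauchy in the `g`-adic sense (so it converges in the
`g`-adic integers `ℤ_g = lim← ℤ/g^iℤ`) but its limit is not an integer, then its word
lengths diverge to infinity. -/
theorem stmt_16 (g : ℤ) (hg : 2 ≤ g) (x : ℕ → ℤ)
    (hcauchy : ∀ N : ℕ, ∃ n₀ : ℕ, ∀ m ≥ n₀, ∀ n ≥ n₀, g ^ N ∣ x m - x n)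
    (hnotint : ∀ k : ℤ, ¬ ∀ N : ℕ, ∃ n₀ : ℕ, ∀ n ≥ n₀, g ^ N ∣ x n - k) :
    Filter.Tendsto (fun n => wlen g (x n)) Filter.atTop Filter.atTop := by
  have hg₁ : 1 < g := by omega
  by_contra hT
  obtain ⟨b, hb⟩ : ∃ b : ℕ, ∃ᶠ n in atTop, wlen g (x n) < b := by
    simpa only [tendsto_atTop, not_forall, not_eventually, not_le] using hT
  obtain ⟨B, hB⟩ := exists_bounded_approx_of_frequently_wlen_lt hg₁ hcauchy hb
  obtain ⟨k, hk⟩ := exists_int_of_bounded_approx hg₁ hB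
  exact hnotint k fun N => eventually_atTop.1 (hk N)
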